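/- Let U₁, U₂ ∈ ℝ^{h×l}, let v*, ṽ₁, ṽ₂ ∈ ℝ^h, set v₁ = v* + ṽ₁ and v₂ = v* + ṽ₂, and for α ∈ [0,1] let g_α = αU₁ + (1−α)U₂. Then for every x ∈ ℝ^l: |(αv₁+(1−α)v₂)ᵀσ(g_α x) − α v₁ᵀσ(U₁ x) − (1−α) v₂ᵀσ(U₂ x)| ≤ α(1−α)(‖ṽ₁‖₂ + ‖ṽ₂‖₂ + 2‖v*‖₂) · ‖(U₂ − U₁)x‖₂. -/

import Mathlib

/-! Write `a = U₁x`, `b = U₂x` and `c = g_α x = αa + (1-α)b`. The deviation equals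
`α v₁ᵀ(σc - σa) + (1-α) v₂ᵀ(σc - σb)`. Since `σ` is 1-Lipschitz and `c - a = (1-α)(b - a)`,
`c - b = -α(b - a)`, Cauchy–Schwarz bounds the two terms by `α(1-α)‖v₁‖‖b - a‖` and
`α(1-α)‖v₂‖‖b - a‖`; finally `‖vₖ‖ ≤ ‖v*‖ + ‖ṽₖ‖`. -/

/-- The Euclidean (ℓ²) norm of a vector in `Fin n → ℝ`. -/
noncomputable def l2norm {n : ℕ} (v : Fin n → ℝ) : ℝ :=
  Real.sqrt (∑ i, (v i) ^ 2)

/-- The two-layer ReLU network `f_{v,U}(x) = vᵀ σ(U x)`. -/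
noncomputable def net {hd ld : ℕ} (U : Fin hd → Fin ld → ℝ) (v : Fin hd → ℝ)
    (x : Fin ld → ℝ) : ℝ :=
  ∑ i, v i * max 0 (∑ j, U i j * x j)

section L2Norm

variable {n : ℕ}

theorem l2norm_eq_norm_toLp (v : Fin n → ℝ) :
    l2norm v = ‖(WithLp.toLp 2 v : EuclideanSpace ℝ (Fin n))‖ := by
  simp [l2norm, EuclideanSpace.norm_eq]

theorem l2norm_nonneg (v : Fin n → ℝ) : 0 ≤ l2norm v :=
  Real.sqrt_nonneg _

theorem l2norm_add_le (v w : Fin n → ℝ) : l2norm (v + w) ≤ l2norm v + l2norm w := by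
  simpa only [l2norm_eq_norm_toLp, WithLp.toLp_add] using norm_add_le _ _

theorem l2norm_smul (c : ℝ) (v : Fin n → ℝ) : l2norm (c • v) = |c| * l2norm v := by
  simp only [l2norm_eq_norm_toLp, WithLp.toLp_smul, norm_smul, Real.norm_eq_abs]

theorem abs_sum_mul_le_l2norm_mul_l2norm (v w : Fin n → ℝ) :
    |∑ i, v i * w i| ≤ l2norm v * l2norm w :=
  calc |∑ i, v i * w i|
      ≤ ∑ i, |v i| * |w i| := by
        simpa only [abs_mul] using Finset.abs_sum_le_sum_abs (fun i => v i * w i) Finset.univ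
    _ ≤ l2norm v * l2norm w := by
      simpa only [l2norm, sq_abs] using Real.sum_mul_le_sqrt_mul_sqrt Finset.univ (|v ·|) (|w ·|)

end L2Norm

section Net

variable {hd ld : ℕ}

theorem net_add_right (U : Fin hd → Fin ld → ℝ) (v w : Fin hd → ℝ) (x : Fin ld → ℝ) :
    net U (v + w) x = net U v x + net U w x := by
  simp only [net, Pi.add_apply, add_mul, Finset.sum_add_distrib]

theorem net_smul_right (U : Fin hd → Fin ld → ℝ) (c : ℝ) (v : Fin hd → ℝ) (x : Fin ld → ℝ) :
    net U (c • v) x = c * net U v x := by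
  simp only [net, Pi.smul_apply, smul_eq_mul, mul_assoc, Finset.mul_sum]

theorem abs_net_sub_net_le (U V : Fin hd → Fin ld → ℝ) (v : Fin hd → ℝ) (x : Fin ld → ℝ) :
    |net U v x - net V v x| ≤ l2norm v * l2norm (fun i => ∑ j, (U i j - V i j) * x j) := by
  have relu_lipschitz : ∀ i, |max 0 (∑ j, U i j * x j) - max 0 (∑ j, V i j * x j)|
      ≤ |∑ j, (U i j - V i j) * x j| := fun i => by
    simpa only [max_comm (0 : ℝ), sub_mul, Finset.sum_sub_distrib]
      using abs_max_sub_max_le_abs _ _ 0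
  calc |net U v x - net V v x|
      = |∑ i, v i * (max 0 (∑ j, U i j * x j) - max 0 (∑ j, V i j * x j))| := by
        simp only [net, mul_sub, Finset.sum_sub_distrib]
    _ ≤ l2norm v * l2norm (fun i => max 0 (∑ j, U i j * x j) - max 0 (∑ j, V i j * x j)) :=
        abs_sum_mul_le_l2norm_mul_l2norm _ _
    _ ≤ l2norm v * l2norm (fun i => ∑ j, (U i j - V i j) * x j) := by
        gcongr
        · exact l2norm_nonneg _
        · simpa only [l2norm, sq_abs] using
            Real.sqrt_le_sqrt (Finset.sum_le_sum fun i _ => sq_le_sq.2 (relu_lipschitz i))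

theorem rowSum_convexComb_sub_left (U₁ U₂ : Fin hd → Fin ld → ℝ) (α : ℝ) (x : Fin ld → ℝ) :
    (fun i => ∑ j, ((α • U₁ + (1 - α) • U₂) i j - U₁ i j) * x j)
      = (1 - α) • fun i => ∑ j, (U₂ i j - U₁ i j) * x j := by
  ext i
  simp only [Pi.smul_apply, Pi.add_apply, smul_eq_mul, Finset.mul_sum]
  exact Finset.sum_congr rfl fun j _ => by ring

theorem rowSum_convexComb_sub_right (U₁ U₂ : Fin hd → Fin ld → ℝ) (α : ℝ) (x : Fin ld → ℝ) :
    (fun i => ∑ j, ((α • U₁ + (1 - α) • U₂) i j - U₂ i j) * x j)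
      = (-α) • fun i => ∑ j, (U₂ i j - U₁ i j) * x j := by
  ext i
  simp only [Pi.smul_apply, Pi.add_apply, smul_eq_mul, Finset.mul_sum]
  exact Finset.sum_congr rfl fun j _ => by ring

end Net

/-- deterministic core of Theorem 1's proof.
With `v₁ = v* + ṽ₁`, `v₂ = v* + ṽ₂` and `g_α = αU₁ + (1−α)U₂`, for every `x`:
`|(αv₁+(1−α)v₂)ᵀσ(g_α x) − αv₁ᵀσ(U₁x) − (1−α)v₂ᵀσ(U₂x)|
  ≤ α(1−α)(‖ṽ₁‖₂+‖ṽ₂‖₂+2‖v*‖₂)·‖(U₂−U₁)x‖₂`. -/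
theorem interp_deviation_deterministic_bound {hd ld : ℕ}
    (U₁ U₂ : Fin hd → Fin ld → ℝ) (vstar vt₁ vt₂ : Fin hd → ℝ)
    (α : ℝ) (hα : α ∈ Set.Icc (0:ℝ) 1) (x : Fin ld → ℝ) :
    |net (α • U₁ + (1 - α) • U₂)
        (α • (vstar + vt₁) + (1 - α) • (vstar + vt₂)) x
      - α * net U₁ (vstar + vt₁) x - (1 - α) * net U₂ (vstar + vt₂) x|
    ≤ α * (1 - α) * (l2norm vt₁ + l2norm vt₂ + 2 * l2norm vstar)
        * l2norm (fun i => ∑ j, (U₂ i j - U₁ i j) * x j) := by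
  obtain ⟨hα₀, hα₁⟩ := hα
  have hα₁' : 0 ≤ 1 - α := sub_nonneg.2 hα₁
  set g := α • U₁ + (1 - α) • U₂
  have h₁ := abs_net_sub_net_le g U₁ (vstar + vt₁) x
  have h₂ := abs_net_sub_net_le g U₂ (vstar + vt₂) x
  rw [rowSum_convexComb_sub_left, l2norm_smul, abs_of_nonneg hα₁'] at h₁
  rw [rowSum_convexComb_sub_right, l2norm_smul, abs_neg, abs_of_nonneg hα₀] at h₂
  set d := l2norm (fun i => ∑ j, (U₂ i j - U₁ i j) * x j)
  calc _ = |α * (net g (vstar + vt₁) x - net U₁ (vstar + vt₁) x)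
          + (1 - α) * (net g (vstar + vt₂) x - net U₂ (vstar + vt₂) x)| := by
        rw [net_add_right, net_smul_right, net_smul_right]
        congr 1
        ring
    _ ≤ α * |net g (vstar + vt₁) x - net U₁ (vstar + vt₁) x|
          + (1 - α) * |net g (vstar + vt₂) x - net U₂ (vstar + vt₂) x| := by
        grw [abs_add_le, abs_mul, abs_mul, abs_of_nonneg hα₀, abs_of_nonneg hα₁']
    _ ≤ α * (l2norm (vstar + vt₁) * ((1 - α) * d))
          + (1 - α) * (l2norm (vstar + vt₂) * (α * d)) := by
        gcongr
    _ = α * (1 - α) * (l2norm (vstar + vt₁) + l2norm (vstar + vt₂)) * d := by ring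
    _ ≤ α * (1 - α) * (l2norm vt₁ + l2norm vt₂ + 2 * l2norm vstar) * d := by
        have : 0 ≤ α * (1 - α) := mul_nonneg hα₀ hα₁'
        have : 0 ≤ d := l2norm_nonneg _
        gcongr α * (1 - α) * ?_ * d
        linarith [l2norm_add_le vstar vt₁, l2norm_add_le vstar vt₂]
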